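/- Define Φ : ℕ⁴ → ℕ⁴ by Φ(c₃, c₄, c₅, c₆) = (c₄ + c₅ + max(c₃, c₆), c₃ + c₅, c₃ + c₄, min(c₃, c₆)). Then Φ is injective. -/
import Mathlib


/-- The piecewise-linear map from Lusztig data `(c₃, c₄, c₅, c₆)` (for the reduced
word `(2,1,3,2)` in `GL₄`) to Kashiwara string data. -/
def lusztigToString : ℕ × ℕ × ℕ × ℕ → ℕ × ℕ × ℕ × ℕ :=
  fun ⟨c₃, c₄, c₅, c₆⟩ => (c₄ + c₅ + max c₃ c₆, c₃ + c₅, c₃ + c₄, min c₃ c₆)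

/-- The map from Lusztig data to string data is injective. -/
theorem lusztigToString_injective : Function.Injective lusztigToString := by
  rintro ⟨a3, a4, a5, a6⟩ ⟨b3, b4, b5, b6⟩ h
  simp only [lusztigToString, Prod.mk.injEq] at h ⊢
  omega
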